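/- For every even positive integer m, the polynomial W_m = Σ_{1 ≤ i < j ≤ 9} (x_i - x_j)^m + Σ_{1 ≤ i < j < k ≤ 9} (S8/3 - x_i - x_j - x_k)^m, where S8 = x1+...+x9, is invariant under every permutation of x1,...,x8 and under the reflection r(x) = x - (⟨x,n⟩/9)·n with n = (2,2,2,-1,-1,-1,-1,-1,-1) (reflection in the hyperplane 2x1+2x2+2x3 = x4+...+x9); i.e. W_m ∘ g = W_m as polynomials in x1,...,x9 for each such linear map g. -/

import Mathlib

open MvPolynomial

noncomputable section

/-- `S8 = x₁ + ⋯ + x₉`. -/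
def S8 : MvPolynomial (Fin 9) ℚ := ∑ i : Fin 9, X i

/-- The normal vector `n = (2,2,2,-1,-1,-1,-1,-1,-1)` of the mirror
`2x₁+2x₂+2x₃ = x₄+⋯+x₉`. -/
def nE8 : Fin 9 → ℚ := ![2, 2, 2, -1, -1, -1, -1, -1, -1]

/-- The matrix of the reflection `r(x) = x - (⟨x,n⟩/9)·n`. -/
def RE8 : Matrix (Fin 9) (Fin 9) ℚ :=
  fun i j => (if i = j then 1 else 0) - nE8 i * nE8 j / 9

/-- Action of the linear map with matrix `M` on a polynomial: `P ↦ P ∘ M`,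
i.e. substitute `xᵢ ↦ ∑ⱼ Mᵢⱼ xⱼ`. -/
def applyLin {n : ℕ} (M : Matrix (Fin n) (Fin n) ℚ) (P : MvPolynomial (Fin n) ℚ) :
    MvPolynomial (Fin n) ℚ :=
  aeval (fun i => ∑ j : Fin n, C (M i j) * X j) P

/-- The `E₈`-invariant polynomial `W_m`. -/
def W (m : ℕ) : MvPolynomial (Fin 9) ℚ :=
  (∑ p ∈ Finset.univ.filter (fun p : Fin 9 × Fin 9 => p.1 < p.2),
      (X p.1 - X p.2) ^ m) +
    ∑ p ∈ Finset.univ.filter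
        (fun p : Fin 9 × Fin 9 × Fin 9 => p.1 < p.2.1 ∧ p.2.1 < p.2.2),
      (C (1/3 : ℚ) * S8 - X p.1 - X p.2.1 - X p.2.2) ^ m

/-!
Scaled by 3, the coefficient vectors of the linear forms in `W m` are `3(eᵢ - eⱼ)` and
`𝟙 - 3(eᵢ + eⱼ + eₖ)`: one root from each pair `±α` of the root system `E₈`, realised in the
hyperplane `x₁ + ⋯ + x₉ = 0`. Thus `W m` is a constant times `∑ ⟨α, x⟩ ^ m` over these 120 roots,
and as `m` is even this sum only sees the roots up to sign. A linear map permuting the roots up to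
sign therefore fixes `W m`. The mirror normal `n = 3(e₁ + e₂ + e₃) - 𝟙` is itself a root, so its
reflection is such a map, as is every permutation of coordinates; it suffices to check this on
integer vectors for the reflection and for the generators `finRotate 9`, `swap 0 1` of
`Perm (Fin 9)`, which the kernel does by evaluation.
-/

open Finset Matrix Equiv

def signNormalize {n : ℕ} (v : Fin n → ℤ) : Fin n → ℤ :=
  if ((List.ofFn v).find? (· ≠ 0)).getD 0 < 0 then -v else v

theorem signNormalize_eq_or_eq_neg {n : ℕ} (v : Fin n → ℤ) :
    signNormalize v = v ∨ signNormalize v = -v := by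
  unfold signNormalize
  split_ifs <;> simp

section PowerSums

variable {n : ℕ}

def linForm : (Fin n → ℤ) →+ MvPolynomial (Fin n) ℚ where
  toFun v := ∑ i, v i • X i
  map_zero' := by simp
  map_add' v w := by simp [add_smul, Finset.sum_add_distrib]

theorem linForm_apply (v : Fin n → ℤ) : linForm v = ∑ i, v i • X i := rfl

theorem linForm_single (i : Fin n) : linForm (Pi.single i 1) = X i := by
  simp [linForm_apply, Pi.single_apply]

theorem linForm_one : linForm (1 : Fin n → ℤ) = ∑ i, X i := by
  simp [linForm_apply]

theorem rename_linForm (σ : Perm (Fin n)) (v : Fin n → ℤ) :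
    rename σ (linForm v) = linForm (v ∘ σ.symm) := by
  simp only [linForm_apply, map_sum, map_zsmul, rename_X, Function.comp_apply]
  exact Fintype.sum_equiv σ _ _ (fun i => by simp)

theorem applyLin_linForm (c : ℚ) (M : Matrix (Fin n) (Fin n) ℤ) (v : Fin n → ℤ) :
    applyLin (c • M.map (↑)) (linForm v) = C c * linForm (v ᵥ* M) := by
  simp only [applyLin, linForm_apply, map_sum, map_zsmul, aeval_X, Matrix.smul_apply,
    Matrix.map_apply, vecMul, dotProduct, Finset.mul_sum, Finset.smul_sum]
  rw [Finset.sum_comm]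
  simp only [Finset.sum_smul, Finset.mul_sum]
  refine Fintype.sum_congr _ _ fun j => Fintype.sum_congr _ _ fun i => ?_
  simp only [zsmul_eq_mul, smul_eq_mul, C_mul, map_intCast, Int.cast_mul]
  ring

def powerSum (s : Multiset (Fin n → ℤ)) (m : ℕ) : MvPolynomial (Fin n) ℚ :=
  (s.map fun v => linForm v ^ m).sum

theorem powerSum_eq_of_map_signNormalize {s t : Multiset (Fin n → ℤ)} {m : ℕ} (hm : Even m)
    (h : s.map signNormalize = t.map signNormalize) : powerSum s m = powerSum t m := by
  have key (u : Multiset (Fin n → ℤ)) :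
      powerSum u m = ((u.map signNormalize).map fun v => linForm v ^ m).sum := by
    rw [powerSum, Multiset.map_map]
    refine congrArg _ (Multiset.map_congr rfl fun v _ => ?_)
    rcases signNormalize_eq_or_eq_neg v with h | h <;> simp [h, hm.neg_pow]
  rw [key, h, ← key]

theorem powerSum_map_smul (k : ℤ) (s : Multiset (Fin n → ℤ)) (m : ℕ) :
    powerSum (s.map (k • ·)) m = C (k : ℚ) ^ m * powerSum s m := by
  simp only [powerSum, Multiset.map_map, Function.comp_def, map_zsmul]
  simp only [zsmul_eq_mul, mul_pow, Multiset.sum_map_mul_left, map_intCast]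

theorem rename_powerSum (σ : Perm (Fin n)) (s : Multiset (Fin n → ℤ)) (m : ℕ) :
    rename σ (powerSum s m) = powerSum (s.map (· ∘ σ.symm)) m := by
  simp only [powerSum, map_multiset_sum, Multiset.map_map, Function.comp_def, map_pow,
    rename_linForm]

theorem applyLin_C_mul (M : Matrix (Fin n) (Fin n) ℚ) (a : ℚ) (P : MvPolynomial (Fin n) ℚ) :
    applyLin M (C a * P) = C a * applyLin M P := by
  simp [applyLin]

theorem applyLin_powerSum (c : ℚ) (M : Matrix (Fin n) (Fin n) ℤ) (s : Multiset (Fin n → ℤ))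
    (m : ℕ) :
    applyLin (c • M.map (↑)) (powerSum s m) = C c ^ m * powerSum (s.map (· ᵥ* M)) m := by
  have h := applyLin_linForm c M
  simp only [applyLin] at h ⊢
  simp only [powerSum, map_multiset_sum, Multiset.map_map, Function.comp_def, map_pow, h, mul_pow,
    Multiset.sum_map_mul_left]

end PowerSums

def renameStabilizer {σ R : Type*} [CommSemiring R] (P : MvPolynomial σ R) :
    Subgroup (Perm σ) where
  carrier := {g | rename g P = P}
  one_mem' := by simp
  mul_mem' {g h} hg hh := by
    rw [Set.mem_ofPred_eq] at *
    rw [Perm.coe_mul, ← rename_rename, hh, hg]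
  inv_mem' {g} hg := by
    rw [Set.mem_ofPred_eq] at *
    conv_lhs => rw [← hg]
    rw [rename_rename, ← Perm.coe_mul, inv_mul_cancel, Perm.coe_one, rename_id_apply]

def pairRoot (p : Fin 9 × Fin 9) : Fin 9 → ℤ := 3 • (Pi.single p.1 1 - Pi.single p.2 1)

def tripleRoot (t : Fin 9 × Fin 9 × Fin 9) : Fin 9 → ℤ :=
  1 - 3 • (Pi.single t.1 1 + Pi.single t.2.1 1 + Pi.single t.2.2 1)

def posRoots : Multiset (Fin 9 → ℤ) :=
  (univ.filter fun p : Fin 9 × Fin 9 => p.1 < p.2).val.map pairRoot +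
    (univ.filter fun t : Fin 9 × Fin 9 × Fin 9 => t.1 < t.2.1 ∧ t.2.1 < t.2.2).val.map tripleRoot

theorem C_third_mul_three_smul {σ : Type*} (P : MvPolynomial σ ℚ) : C (1 / 3) * (3 • P) = P := by
  rw [nsmul_eq_mul, Nat.cast_ofNat, ← mul_assoc, ← map_ofNat C 3, ← C_mul]
  norm_num

theorem C_third_mul_linForm_pairRoot (p : Fin 9 × Fin 9) :
    C (1 / 3) * linForm (pairRoot p) = X p.1 - X p.2 := by
  rw [pairRoot, map_nsmul, map_sub, linForm_single, linForm_single, C_third_mul_three_smul]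

theorem C_third_mul_linForm_tripleRoot (t : Fin 9 × Fin 9 × Fin 9) :
    C (1 / 3) * linForm (tripleRoot t) = C (1 / 3) * S8 - X t.1 - X t.2.1 - X t.2.2 := by
  rw [tripleRoot, map_sub, map_nsmul, map_add, map_add, linForm_single, linForm_single,
    linForm_single, linForm_one, mul_sub, C_third_mul_three_smul, S8]
  ring

theorem W_eq_C_mul_powerSum (m : ℕ) : W m = C ((1 / 3) ^ m) * powerSum posRoots m := by
  simp only [map_pow, W, powerSum, posRoots, Multiset.map_add, Multiset.sum_add, Multiset.map_map,
    Function.comp_def, ← Finset.sum_eq_multiset_sum, mul_add, Finset.mul_sum, ← mul_pow,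
    C_third_mul_linForm_pairRoot, C_third_mul_linForm_tripleRoot]

def nE8Int : Fin 9 → ℤ := ![2, 2, 2, -1, -1, -1, -1, -1, -1]

def RE8Int : Matrix (Fin 9) (Fin 9) ℤ := 9 • 1 - vecMulVec nE8Int nE8Int

theorem RE8_eq_inv_nine_smul : RE8 = (9 : ℚ)⁻¹ • RE8Int.map (↑) := by
  have hn (i : Fin 9) : nE8 i = nE8Int i := by fin_cases i <;> rfl
  ext i j
  simp only [RE8, RE8Int, hn, Matrix.smul_apply, Matrix.map_apply, Matrix.sub_apply,
    vecMulVec_apply, Matrix.one_apply]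
  split_ifs <;> norm_num <;> ring

set_option maxRecDepth 100000 in
theorem posRoots_map_finRotate_signNormalize :
    (posRoots.map (· ∘ (finRotate 9).symm)).map signNormalize = posRoots.map signNormalize := by
  decide +kernel

set_option maxRecDepth 100000 in
theorem posRoots_map_swap_signNormalize :
    (posRoots.map (· ∘ (swap 0 1 : Perm (Fin 9)).symm)).map signNormalize =
      posRoots.map signNormalize := by
  decide +kernel

theorem posRoots_map_vecMul_RE8Int_signNormalize :
    (posRoots.map (· ᵥ* RE8Int)).map signNormalize =
      (posRoots.map ((9 : ℤ) • ·)).map signNormalize := by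
  decide +kernel

theorem rename_W_of_map_signNormalize {m : ℕ} (hm : Even m) {g : Perm (Fin 9)}
    (hg : (posRoots.map (· ∘ g.symm)).map signNormalize = posRoots.map signNormalize) :
    rename g (W m) = W m := by
  rw [W_eq_C_mul_powerSum, map_mul, rename_C, rename_powerSum,
    powerSum_eq_of_map_signNormalize hm hg]

theorem renameStabilizer_W {m : ℕ} (hm : Even m) : renameStabilizer (W m) = ⊤ := by
  rw [eq_top_iff, ← Perm.closure_cycle_adjacent_swap isCycle_finRotate support_finRotate 0,
    Subgroup.closure_le]
  rintro g (rfl | rfl)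
  · exact rename_W_of_map_signNormalize hm posRoots_map_finRotate_signNormalize
  · rw [finRotate_apply, zero_add]
    exact rename_W_of_map_signNormalize hm posRoots_map_swap_signNormalize

theorem applyLin_RE8_W {m : ℕ} (hm : Even m) : applyLin RE8 (W m) = W m := by
  rw [W_eq_C_mul_powerSum, RE8_eq_inv_nine_smul, applyLin_C_mul, applyLin_powerSum,
    powerSum_eq_of_map_signNormalize hm posRoots_map_vecMul_RE8Int_signNormalize, powerSum_map_smul,
    ← mul_assoc (C 9⁻¹ ^ m), ← mul_pow, ← C_mul]
  norm_num

theorem W_invariant_general (m : ℕ) (hme : Even m) :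
    (∀ σ : Equiv.Perm (Fin 9), σ 8 = 8 → rename σ (W m) = W m) ∧
    applyLin RE8 (W m) = W m :=
  ⟨fun σ _ => (renameStabilizer_W hme).ge (Subgroup.mem_top σ), applyLin_RE8_W hme⟩

/-- For every even positive `m`, `W_m` is invariant under every permutation of
`x₁,…,x₈` and under the reflection in `2x₁+2x₂+2x₃ = x₄+⋯+x₉`. -/
theorem W_invariant (m : ℕ) (hm : 0 < m) (hme : Even m) :
    (∀ σ : Equiv.Perm (Fin 9), σ 8 = 8 → rename σ (W m) = W m) ∧
    applyLin RE8 (W m) = W m :=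
  W_invariant_general m hme
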